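/- arXiv:1405.0356 — 2 statements merged into one kernel-verified Lean document; each statement's English description precedes it below -/
import Mathlib

section
/- Let c₀ ∈ ℝ, δ', δ'' > 0 and A', A'' > 0. Let φ̂ be holomorphic on the half-strip S_{δ'} = {ζ ∈ ℂ : dist(ζ, ℝ≥0) < δ'} with |φ̂(ζ)| ≤ A'·e^{c₀|ζ|} there, and let ψ̂ be holomorphic on S_{δ''} with |ψ̂(ζ)| ≤ A''·e^{c₀|ζ|} there. Set δ := min(δ', δ''). Then the convolution χ(ζ) := ∫₀^1 ζ·φ̂(sζ)·ψ̂((1−s)ζ) ds is holomorphic on S_δ and satisfies |χ(ζ)| ≤ A'·A''·|ζ|·e^{c₀|ζ|} for all ζ ∈ S_δ; moreover, for every z ∈ ℂ with Re z > c₀, ∫₀^{+∞} e^{−zζ} χ(ζ) dζ = (∫₀^{+∞} e^{−zζ} φ̂(ζ) dζ)·(∫₀^{+∞} e^{−zζ} ψ̂(ζ) dζ). -/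
/-!
The integrand `ζ φ̂(sζ) ψ̂((1-s)ζ)` is jointly continuous, and holomorphic in `ζ`, because `S_δ` is
star-shaped with respect to `0`; holomorphy of its integral over `s ∈ [0, 1]` follows by
differentiating under the integral sign, Cauchy's estimate providing the domination. The growth
bound holds pointwise, since `e^{c₀ s|ζ|} e^{c₀ (1-s)|ζ|} = e^{c₀|ζ|}`. Substituting `u = st` turns
`χ(t)` into `∫₀^t φ̂(u) ψ̂(t-u) du`, so `1_{t>0} e^{-zt} χ(t)` is the convolution on `ℝ` of
`1_{t>0} e^{-zt} φ̂(t)` and `1_{t>0} e^{-zt} ψ̂(t)`. Both are integrable when `Re z > c₀`, and the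
integral of a convolution is the product of the integrals.
-/

open MeasureTheory

/-- The half-strip `S_δ = {ζ ∈ ℂ : dist(ζ, ℝ≥0) < δ}`. -/
def halfStrip (δ : ℝ) : Set ℂ :=
  {ζ : ℂ | Metric.infDist ζ (Complex.ofReal '' Set.Ici (0 : ℝ)) < δ}

open Set Filter Topology Metric Interval Convolution

section HalfStrip

variable {δ : ℝ}

lemma isOpen_halfStrip (δ : ℝ) : IsOpen (halfStrip δ) :=
  isOpen_Iio.preimage (continuous_infDist_pt _)

lemma halfStrip_mono {δ₁ δ₂ : ℝ} (h : δ₁ ≤ δ₂) : halfStrip δ₁ ⊆ halfStrip δ₂ :=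
  fun _ hζ => hζ.trans_le h

lemma ofReal_mem_halfStrip (hδ : 0 < δ) {t : ℝ} (ht : 0 ≤ t) : (t : ℂ) ∈ halfStrip δ :=
  (infDist_le_dist_of_mem (mem_image_of_mem _ ht)).trans_lt (by simpa using hδ)

lemma ofReal_mul_mem_halfStrip {ζ : ℂ} (hζ : ζ ∈ halfStrip δ) {s : ℝ} (hs : s ∈ Icc 0 1) :
    (s : ℂ) * ζ ∈ halfStrip δ := by
  obtain ⟨_, ⟨r, hr, rfl⟩, hd⟩ :=
    (infDist_lt_iff ⟨_, mem_image_of_mem _ self_mem_Ici⟩).1 hζ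
  refine (infDist_le_dist_of_mem (mem_image_of_mem _ (mul_nonneg hs.1 hr))).trans_lt ?_
  calc dist ((s : ℂ) * ζ) ((s * r : ℝ) : ℂ) = s * dist ζ r := by
        rw [Complex.ofReal_mul, dist_eq_norm, dist_eq_norm, ← mul_sub, norm_mul,
          Complex.norm_of_nonneg hs.1]
    _ ≤ dist ζ r := mul_le_of_le_one_left dist_nonneg hs.2
    _ < δ := hd

lemma one_sub_ofReal_mul_mem_halfStrip {ζ : ℂ} (hζ : ζ ∈ halfStrip δ) {s : ℝ}
    (hs : s ∈ Icc 0 1) : (1 - (s : ℂ)) * ζ ∈ halfStrip δ := by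
  simpa using ofReal_mul_mem_halfStrip hζ (s := 1 - s) ⟨by linarith [hs.2], by linarith [hs.1]⟩

end HalfStrip

section ParametricIntegral

variable {E : Type*} [NormedAddCommGroup E] [NormedSpace ℂ E]
  {U : Set ℂ} {F : ℂ → ℝ → E} {a b : ℝ}

lemma aestronglyMeasurable_deriv_of_continuousOn_uncurry (hU : IsOpen U)
    (hF : ContinuousOn (Function.uncurry F) (U ×ˢ [[a, b]]))
    (hFd : ∀ s ∈ [[a, b]], DifferentiableOn ℂ (F · s) U) {ζ₀ : ℂ} (hζ₀ : ζ₀ ∈ U) :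
    AEStronglyMeasurable (fun s => deriv (F · s) ζ₀) (volume.restrict (Ι a b)) := by
  -- `deriv (F · s) ζ₀` is the limit of difference quotients along `ζ₀ + r / (n + 2)`, each of
  -- which is continuous in `s`.
  obtain ⟨r, hr, hrU⟩ := Metric.isOpen_iff.mp hU ζ₀ hζ₀
  set h : ℕ → ℂ := fun n => ((r / (n + 2) : ℝ) : ℂ)
  have hh_pos : ∀ n : ℕ, 0 < r / (n + 2) := fun n => by positivity
  have hh_mem : ∀ n, ζ₀ + h n ∈ U := fun n => hrU <| by
    rw [mem_ball, dist_self_add_left, Complex.norm_real, Real.norm_of_nonneg (hh_pos n).le]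
    exact div_lt_self hr (by linarith [n.cast_nonneg (α := ℝ)])
  have hh : Tendsto h atTop (𝓝[≠] 0) := by
    refine tendsto_nhdsWithin_iff.2 ⟨?_, .of_forall fun n => ?_⟩
    · have := (tendsto_const_div_atTop_nhds_zero_nat r).comp (tendsto_add_atTop_nat 2)
      simpa [h, Function.comp_def] using (Complex.continuous_ofReal.tendsto 0).comp this
    · exact Complex.ofReal_ne_zero.2 (hh_pos n).ne'
  refine aestronglyMeasurable_of_tendsto_ae atTop
    (f := fun n s => (h n)⁻¹ • (F (ζ₀ + h n) s - F ζ₀ s)) (fun n => ?_) ?_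
  · exact ((((hF.uncurry_left _ (hh_mem n)).sub
      (hF.uncurry_left _ hζ₀)).const_smul _).mono
      uIoc_subset_uIcc).aestronglyMeasurable measurableSet_uIoc
  · refine (ae_restrict_iff' measurableSet_uIoc).2 (.of_forall fun s hs => ?_)
    exact ((hFd s (uIoc_subset_uIcc hs)).differentiableAt
      (hU.mem_nhds hζ₀)).hasDerivAt.tendsto_slope_zero.comp hh

theorem differentiableOn_intervalIntegral_of_continuousOn_uncurry [CompleteSpace E] (hU : IsOpen U)
    (hF : ContinuousOn (Function.uncurry F) (U ×ˢ [[a, b]]))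
    (hFd : ∀ s ∈ [[a, b]], DifferentiableOn ℂ (F · s) U) :
    DifferentiableOn ℂ (fun ζ => ∫ s in a..b, F ζ s) U := by
  intro ζ₀ hζ₀
  obtain ⟨r, hr, hrU⟩ := nhds_basis_closedBall.mem_iff.1 (hU.mem_nhds hζ₀)
  obtain ⟨M, hM⟩ := ((isCompact_closedBall ζ₀ r).prod isCompact_uIcc).exists_bound_of_continuousOn
    (hF.mono (prod_mono hrU le_rfl))
  have hball : ∀ ζ ∈ ball ζ₀ (r / 2), closedBall ζ (r / 2) ⊆ closedBall ζ₀ r := fun ζ hζ =>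
    closedBall_subset_closedBall' (by linarith [mem_ball.1 hζ])
  have hderiv_le : ∀ s ∈ [[a, b]], ∀ ζ ∈ ball ζ₀ (r / 2), ‖deriv (F · s) ζ‖ ≤ M / (r / 2) :=
    fun s hs ζ hζ => Complex.norm_deriv_le_of_forall_mem_sphere_norm_le (half_pos hr)
      ((hFd s hs).diffContOnCl_ball ((hball ζ hζ).trans hrU))
      fun w hw => hM (w, s) ⟨hball ζ hζ (sphere_subset_closedBall hw), hs⟩
  refine (intervalIntegral.hasDerivAt_integral_of_dominated_loc_of_deriv_le
    (F' := fun ζ s => deriv (F · s) ζ) (bound := fun _ => M / (r / 2))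
    (ball_mem_nhds ζ₀ (half_pos hr)) ?_ ?_
    (aestronglyMeasurable_deriv_of_continuousOn_uncurry hU hF hFd hζ₀) ?_
    intervalIntegrable_const ?_).2.differentiableAt.differentiableWithinAt
  · filter_upwards [hU.mem_nhds hζ₀] with ζ hζ
    exact ((hF.uncurry_left _ hζ).mono
      uIoc_subset_uIcc).aestronglyMeasurable measurableSet_uIoc
  · exact (hF.uncurry_left _ hζ₀).intervalIntegrable
  · exact .of_forall fun s hs => hderiv_le s (uIoc_subset_uIcc hs)
  · refine .of_forall fun s hs ζ hζ => ?_
    exact ((hFd s (uIoc_subset_uIcc hs)).differentiableAt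
      (hU.mem_nhds (hrU (ball_subset_closedBall.trans (closedBall_subset_closedBall
        (by linarith)) hζ)))).hasDerivAt

end ParametricIntegral

section Laplace

lemma integrableOn_cexp_mul_of_norm_le {f : ℝ → ℂ} {A c : ℝ} {z : ℂ}
    (hf : ContinuousOn f (Ioi 0)) (hbd : ∀ t > 0, ‖f t‖ ≤ A * Real.exp (c * t))
    (hz : c < z.re) : IntegrableOn (fun t : ℝ => Complex.exp (-z * t) * f t) (Ioi 0) := by
  refine Integrable.mono' ((exp_neg_integrableOn_Ioi 0 (sub_pos.2 hz)).const_mul A)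
    ((Continuous.continuousOn (by fun_prop)).mul hf |>.aestronglyMeasurable measurableSet_Ioi)
    ((ae_restrict_iff' measurableSet_Ioi).2 (.of_forall fun t ht => ?_))
  calc ‖Complex.exp (-z * t) * f t‖ ≤ Real.exp (-z.re * t) * (A * Real.exp (c * t)) := by
        rw [norm_mul, Complex.norm_exp]
        simpa using mul_le_mul_of_nonneg_left (hbd t ht) (Real.exp_nonneg _)
    _ = A * Real.exp (-(z.re - c) * t) := by
        rw [mul_left_comm, ← Real.exp_add]; ring_nf

lemma convolution_indicator_cexp_mul (f g : ℝ → ℂ) (z : ℂ) :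
    (Ioi 0).indicator (fun t : ℝ => Complex.exp (-z * t) * f t)
        ⋆[ContinuousLinearMap.mul ℂ ℂ] (Ioi 0).indicator (fun t : ℝ => Complex.exp (-z * t) * g t) =
      (Ioi 0).indicator (fun t : ℝ => Complex.exp (-z * t) * ∫ u in 0..t, f u * g (t - u)) := by
  ext t
  have hsupp : ∀ u : ℝ,
      (Ioi 0).indicator (fun t : ℝ => Complex.exp (-z * t) * f t) u *
        (Ioi 0).indicator (fun t : ℝ => Complex.exp (-z * t) * g t) (t - u) =
      (Ioo 0 t).indicator (fun u => Complex.exp (-z * t) * (f u * g (t - u))) u := by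
    intro u
    by_cases hu : u ∈ Ioo 0 t
    · rw [indicator_of_mem hu, indicator_of_mem (mem_Ioi.2 hu.1),
        indicator_of_mem (mem_Ioi.2 (sub_pos.2 hu.2)),
        mul_mul_mul_comm, ← Complex.exp_add]
      push_cast; ring_nf
    · rw [indicator_of_notMem hu]
      rcases not_and_or.1 hu with hu | hu
      · rw [indicator_of_notMem (notMem_Ioi.2 (not_lt.1 hu)), zero_mul]
      · rw [indicator_of_notMem (notMem_Ioi.2 (sub_nonpos.2 (not_lt.1 hu))), mul_zero]
  rw [convolution_def]
  simp only [ContinuousLinearMap.mul_apply', hsupp]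
  rw [integral_indicator measurableSet_Ioo]
  rcases lt_or_ge 0 t with ht | ht
  · rw [indicator_of_mem (mem_Ioi.2 ht), ← integral_Ioc_eq_integral_Ioo,
      ← intervalIntegral.integral_of_le ht.le, intervalIntegral.integral_const_mul]
  · rw [indicator_of_notMem (notMem_Ioi.2 ht), Ioo_eq_empty (not_lt.2 ht), Measure.restrict_empty,
      integral_zero_measure]

theorem integral_Ioi_cexp_mul_convolution {f g : ℝ → ℂ} {z : ℂ}
    (hf : IntegrableOn (fun t : ℝ => Complex.exp (-z * t) * f t) (Ioi 0))
    (hg : IntegrableOn (fun t : ℝ => Complex.exp (-z * t) * g t) (Ioi 0)) :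
    ∫ t in Ioi (0 : ℝ), Complex.exp (-z * t) * ∫ u in 0..t, f u * g (t - u) =
      (∫ t in Ioi (0 : ℝ), Complex.exp (-z * t) * f t) *
        ∫ t in Ioi (0 : ℝ), Complex.exp (-z * t) * g t := by
  rw [← integral_indicator measurableSet_Ioi, ← convolution_indicator_cexp_mul,
    integral_convolution _ (hf.integrable_indicator measurableSet_Ioi)
      (hg.integrable_indicator measurableSet_Ioi),
    integral_indicator measurableSet_Ioi, integral_indicator measurableSet_Ioi]
  rfl

lemma intervalIntegral_mul_comp_sub_eq (f g : ℂ → ℂ) (t : ℝ) :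
    ∫ s in (0 : ℝ)..1, (t : ℂ) * f (s * t) * g ((1 - s) * t) =
      ∫ u in 0..t, f u * g ↑(t - u) := by
  have := intervalIntegral.smul_integral_comp_mul_right (a := 0) (b := 1)
    (fun u : ℝ => f u * g ↑(t - u)) t
  simp only [zero_mul, one_mul, Complex.real_smul, ← intervalIntegral.integral_const_mul] at this
  rw [← this]
  congr 1 with s
  push_cast; ring_nf

end Laplace

section HalfStripConvolution

variable {c₀ δ' δ'' A' A'' : ℝ} {φ ψ : ℂ → ℂ}

lemma continuousOn_halfStrip_convolution_integrand
    (hφ : ContinuousOn φ (halfStrip δ')) (hψ : ContinuousOn ψ (halfStrip δ'')) :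
    ContinuousOn (Function.uncurry fun (ζ : ℂ) (s : ℝ) => ζ * φ (s * ζ) * ψ ((1 - s) * ζ))
      (halfStrip (min δ' δ'') ×ˢ [[0, 1]]) := by
  rw [uIcc_of_le zero_le_one]
  refine (continuousOn_fst.mul (hφ.comp (by fun_prop) fun p hp => ?_)).mul
    (hψ.comp (by fun_prop) fun p hp => ?_)
  · exact halfStrip_mono (min_le_left _ _) (ofReal_mul_mem_halfStrip hp.1 hp.2)
  · exact halfStrip_mono (min_le_right _ _) (one_sub_ofReal_mul_mem_halfStrip hp.1 hp.2)

lemma differentiableOn_halfStrip_convolution_integrand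
    (hφ : DifferentiableOn ℂ φ (halfStrip δ')) (hψ : DifferentiableOn ℂ ψ (halfStrip δ''))
    {s : ℝ} (hs : s ∈ Icc 0 1) :
    DifferentiableOn ℂ (fun ζ : ℂ => ζ * φ (s * ζ) * ψ ((1 - s) * ζ)) (halfStrip (min δ' δ'')) :=
  (differentiableOn_id.mul (hφ.comp (by fun_prop) fun _ hζ =>
      halfStrip_mono (min_le_left _ _) (ofReal_mul_mem_halfStrip hζ hs))).mul
    (hψ.comp (by fun_prop) fun _ hζ =>
      halfStrip_mono (min_le_right _ _) (one_sub_ofReal_mul_mem_halfStrip hζ hs))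

lemma norm_halfStrip_convolution_integrand_le
    (hφbd : ∀ ζ ∈ halfStrip δ', ‖φ ζ‖ ≤ A' * Real.exp (c₀ * ‖ζ‖))
    (hψbd : ∀ ζ ∈ halfStrip δ'', ‖ψ ζ‖ ≤ A'' * Real.exp (c₀ * ‖ζ‖))
    {ζ : ℂ} (hζ : ζ ∈ halfStrip (min δ' δ'')) {s : ℝ} (hs : s ∈ Icc 0 1) :
    ‖ζ * φ (s * ζ) * ψ ((1 - s) * ζ)‖ ≤ A' * A'' * ‖ζ‖ * Real.exp (c₀ * ‖ζ‖) := by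
  have hφs := hφbd _ (halfStrip_mono (min_le_left _ _) (ofReal_mul_mem_halfStrip hζ hs))
  have hψs := hψbd _ (halfStrip_mono (min_le_right _ _) (one_sub_ofReal_mul_mem_halfStrip hζ hs))
  have hnorm_s : ‖(s : ℂ) * ζ‖ = s * ‖ζ‖ := by rw [norm_mul, Complex.norm_of_nonneg hs.1]
  have hnorm_1s : ‖(1 - (s : ℂ)) * ζ‖ = (1 - s) * ‖ζ‖ := by
    rw [norm_mul, ← Complex.ofReal_one, ← Complex.ofReal_sub,
      Complex.norm_of_nonneg (sub_nonneg.2 hs.2)]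
  rw [hnorm_s] at hφs
  rw [hnorm_1s] at hψs
  calc ‖ζ * φ (s * ζ) * ψ ((1 - s) * ζ)‖
      ≤ ‖ζ‖ * (A' * Real.exp (c₀ * (s * ‖ζ‖))) * (A'' * Real.exp (c₀ * ((1 - s) * ‖ζ‖))) := by
        rw [norm_mul, norm_mul]
        gcongr
        exact mul_nonneg (norm_nonneg _) ((norm_nonneg _).trans hφs)
    _ = A' * A'' * ‖ζ‖ * Real.exp (c₀ * ‖ζ‖) := by
        rw [show c₀ * ‖ζ‖ = c₀ * (s * ‖ζ‖) + c₀ * ((1 - s) * ‖ζ‖) by ring, Real.exp_add]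
        ring

lemma integrableOn_cexp_mul_of_halfStrip {δ A : ℝ} (hδ : 0 < δ)
    (hφ : ContinuousOn φ (halfStrip δ)) (hφbd : ∀ ζ ∈ halfStrip δ, ‖φ ζ‖ ≤ A * Real.exp (c₀ * ‖ζ‖))
    {z : ℂ} (hz : c₀ < z.re) :
    IntegrableOn (fun t : ℝ => Complex.exp (-z * t) * φ t) (Ioi 0) :=
  integrableOn_cexp_mul_of_norm_le
    (hφ.comp Complex.continuous_ofReal.continuousOn fun _ ht =>
      ofReal_mem_halfStrip hδ (le_of_lt ht))
    (fun t ht => by simpa [abs_of_pos ht] using hφbd _ (ofReal_mem_halfStrip hδ ht.le)) hz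

end HalfStripConvolution

theorem stmt_3_general (c₀ δ' δ'' A' A'' : ℝ) (hδ' : 0 < δ') (hδ'' : 0 < δ'')
    (φhat ψhat : ℂ → ℂ)
    (hφ : DifferentiableOn ℂ φhat (halfStrip δ'))
    (hφbd : ∀ ζ ∈ halfStrip δ', ‖φhat ζ‖ ≤ A' * Real.exp (c₀ * ‖ζ‖))
    (hψ : DifferentiableOn ℂ ψhat (halfStrip δ''))
    (hψbd : ∀ ζ ∈ halfStrip δ'', ‖ψhat ζ‖ ≤ A'' * Real.exp (c₀ * ‖ζ‖)) :
    DifferentiableOn ℂ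
        (fun ζ : ℂ => ∫ s in (0:ℝ)..1, ζ * φhat ((s : ℂ) * ζ) * ψhat ((1 - (s : ℂ)) * ζ))
        (halfStrip (min δ' δ'')) ∧
      (∀ ζ ∈ halfStrip (min δ' δ''),
        ‖∫ s in (0:ℝ)..1, ζ * φhat ((s : ℂ) * ζ) * ψhat ((1 - (s : ℂ)) * ζ)‖ ≤
          A' * A'' * ‖ζ‖ * Real.exp (c₀ * ‖ζ‖)) ∧
      ∀ z : ℂ, c₀ < z.re →
        (∫ t in Set.Ioi (0:ℝ), Complex.exp (-z * (t : ℂ)) *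
            (∫ s in (0:ℝ)..1,
              (t : ℂ) * φhat ((s : ℂ) * (t : ℂ)) * ψhat ((1 - (s : ℂ)) * (t : ℂ)))) =
          (∫ t in Set.Ioi (0:ℝ), Complex.exp (-z * (t : ℂ)) * φhat (t : ℂ)) *
            (∫ t in Set.Ioi (0:ℝ), Complex.exp (-z * (t : ℂ)) * ψhat (t : ℂ)) := by
  refine ⟨?_, fun ζ hζ => ?_, fun z hz => ?_⟩
  · exact differentiableOn_intervalIntegral_of_continuousOn_uncurry (isOpen_halfStrip _)
      (continuousOn_halfStrip_convolution_integrand hφ.continuousOn hψ.continuousOn)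
      fun s hs => differentiableOn_halfStrip_convolution_integrand hφ hψ
        (by rwa [uIcc_of_le zero_le_one] at hs)
  · have := intervalIntegral.norm_integral_le_of_norm_le_const fun s hs =>
      norm_halfStrip_convolution_integrand_le hφbd hψbd hζ
        (Ioc_subset_Icc_self (by rwa [uIoc_of_le zero_le_one] at hs))
    rwa [sub_zero, abs_one, mul_one] at this
  · simp only [intervalIntegral_mul_comp_sub_eq]
    exact integral_Ioi_cexp_mul_convolution
      (integrableOn_cexp_mul_of_halfStrip hδ' hφ.continuousOn hφbd hz)
      (integrableOn_cexp_mul_of_halfStrip hδ'' hψ.continuousOn hψbd hz)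

/-- Stability under convolution of functions with exponential growth on half-strips, and
the fact that the Laplace transform along `ℝ⁺` maps convolution to pointwise product. -/
theorem stmt_3 (c₀ δ' δ'' A' A'' : ℝ) (hδ' : 0 < δ') (hδ'' : 0 < δ'')
    (hA' : 0 < A') (hA'' : 0 < A'') (φhat ψhat : ℂ → ℂ)
    (hφ : DifferentiableOn ℂ φhat (halfStrip δ'))
    (hφbd : ∀ ζ ∈ halfStrip δ', ‖φhat ζ‖ ≤ A' * Real.exp (c₀ * ‖ζ‖))
    (hψ : DifferentiableOn ℂ ψhat (halfStrip δ''))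
    (hψbd : ∀ ζ ∈ halfStrip δ'', ‖ψhat ζ‖ ≤ A'' * Real.exp (c₀ * ‖ζ‖)) :
    DifferentiableOn ℂ
        (fun ζ : ℂ => ∫ s in (0:ℝ)..1, ζ * φhat ((s : ℂ) * ζ) * ψhat ((1 - (s : ℂ)) * ζ))
        (halfStrip (min δ' δ'')) ∧
      (∀ ζ ∈ halfStrip (min δ' δ''),
        ‖∫ s in (0:ℝ)..1, ζ * φhat ((s : ℂ) * ζ) * ψhat ((1 - (s : ℂ)) * ζ)‖ ≤
          A' * A'' * ‖ζ‖ * Real.exp (c₀ * ‖ζ‖)) ∧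
      ∀ z : ℂ, c₀ < z.re →
        (∫ t in Set.Ioi (0:ℝ), Complex.exp (-z * (t : ℂ)) *
            (∫ s in (0:ℝ)..1,
              (t : ℂ) * φhat ((s : ℂ) * (t : ℂ)) * ψhat ((1 - (s : ℂ)) * (t : ℂ)))) =
          (∫ t in Set.Ioi (0:ℝ), Complex.exp (-z * (t : ℂ)) * φhat (t : ℂ)) *
            (∫ t in Set.Ioi (0:ℝ), Complex.exp (-z * (t : ℂ)) * ψhat (t : ℂ)) :=
  stmt_3_general c₀ δ' δ'' A' A'' hδ' hδ'' φhat ψhat hφ hφbd hψ hψbd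
end

section
/- Identify ℂ[[z^{−1}]] with ℂ[[X]] via X = z^{−1} and let ∂φ := −X²·(dφ/dX). For every χ ∈ ℂ[[X]]: (a) the family (((−1)^k/k!)·∂^{k−1}(χ^k))_{k≥1} is formally summable (the X-adic order of ∂^{k−1}(χ^k) is at least k−1), so φ := Σ_{k≥1} ((−1)^k/k!)·∂^{k−1}(χ^k) is a well-defined element of ℂ[[X]]; (b) the family ((1/k!)·χ^k·∂^kφ)_{k≥0} is formally summable and χ + Σ_{k≥0} (1/k!)·χ^k·∂^kφ = 0. -/
/-- The derivative `d/dX` of a formal power series. -/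
noncomputable def dX (φ : PowerSeries ℂ) : PowerSeries ℂ :=
  PowerSeries.mk fun n => ((n : ℂ) + 1) * PowerSeries.coeff (n + 1) φ

/-- The derivation `∂ = d/dz` on `ℂ[[z⁻¹]] ≅ ℂ[[X]]` (with `X = z⁻¹`): `∂φ = −X²·φ'`. -/
noncomputable def pd (φ : PowerSeries ℂ) : PowerSeries ℂ :=
  -(PowerSeries.X ^ 2 * dX φ)

/-!
Since `∂` raises the `X`-adic order by one, the coefficient of `X^m` in `Σ_k χ^k ∂^k φ / k!`
only involves the terms `k ≤ m` and the truncation `φ_m` of `φ` after its first `m + 1` terms.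
Expanding `χ^k ∂^k φ_m` and collecting the terms of total derivative order `n = k + q`, one gets
`(1/(n+1)!) Σ_q (-1)^(q+1) C(n+1, q+1) χ^(n-q) ∂^n(χ^(q+1)) = -χ^(n+1) ∂^n(1) / (n+1)!`,
which is `-χ` for `n = 0` and `0` otherwise. The identity used holds for any derivation `D`:
`Σ_q (-1)^q C(N, q) x^(N-q) D^m(x^q)` is `D^m` taken in `y` of `(x - y)^N`, evaluated at `y = x`,
and vanishes for `m < N` since each derivative lowers the power of `x - y` by at most one.
-/

open Finset

theorem Finset.sum_range_sum_range_eq_sum_range_sum_antidiagonal {M : Type*} [AddCommMonoid M]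
    {N : ℕ} {F : ℕ → ℕ → M} (hF : ∀ k q, N ≤ k + q → F k q = 0) :
    ∑ k ∈ range N, ∑ q ∈ range N, F k q = ∑ n ∈ range N, ∑ p ∈ antidiagonal n, F p.1 p.2 := by
  simp_rw [Nat.sum_antidiagonal_eq_sum_range_succ F, sum_range_diag_flip]
  refine sum_congr rfl fun k _ => (sum_subset (range_mono (Nat.sub_le N k)) ?_).symm
  intro q _ hq
  exact hF k q (by simp at hq; omega)

namespace Derivation

section CommRing

variable {R A : Type*} [CommSemiring R] [CommRing A] [Algebra R A] (D : Derivation R A A) (x : A)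

theorem iterate_map_one {n : ℕ} (hn : n ≠ 0) : D^[n] 1 = 0 := by
  obtain ⟨n, rfl⟩ := Nat.exists_eq_succ_of_ne_zero hn
  rw [Function.iterate_succ_apply, map_one_eq_zero, iterate_map_zero]

/-- The value at `y = x` of `D^m` applied in the variable `y` to `(x - y)^N`. -/
def binomialIterate (N m : ℕ) : A :=
  ∑ p ∈ antidiagonal N, ((-1) ^ p.1 * N.choose p.1 : ℤ) • (x ^ p.2 * D^[m] (x ^ p.1))

theorem binomialIterate_zero_right {N : ℕ} (hN : N ≠ 0) : D.binomialIterate x N 0 = 0 := by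
  have alternating : ∑ p ∈ antidiagonal N, ((-1) ^ p.1 * N.choose p.1 : ℤ) = 0 := by
    simpa [zero_pow hN, mul_comm] using ((Commute.all (-1 : ℤ) 1).add_pow' N).symm
  simp only [binomialIterate, Function.iterate_zero_apply]
  rw [sum_congr rfl fun p hp => by rw [← pow_add, add_comm, mem_antidiagonal.mp hp],
    ← sum_smul, alternating, zero_smul]

theorem map_binomialIterate (N m : ℕ) :
    D (D.binomialIterate x (N + 1) m) =
      D.binomialIterate x (N + 1) (m + 1) + (N + 1) • (D x * D.binomialIterate x N m) := by
  simp only [binomialIterate, map_sum, map_zsmul, leibniz, leibniz_pow, smul_eq_mul, smul_add,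
    sum_add_distrib, Function.iterate_succ_apply']
  congr 1
  rw [Nat.sum_antidiagonal_succ', mul_sum, smul_sum]
  simp only [zero_smul, mul_zero, smul_zero, zero_add]
  refine sum_congr rfl fun ⟨i, j⟩ hij => ?_
  have hj : N + 1 - i = j + 1 := by rw [← mem_antidiagonal.mp hij]; omega
  have choose_mul : ((N + 1).choose i * (j + 1) : A) = N.choose i * (N + 1) := by
    have := congrArg (Nat.cast : ℕ → A) (Nat.choose_mul_succ_eq N i)
    rw [hj] at this
    push_cast at this
    exact this.symm
  simp only [zsmul_eq_mul, nsmul_eq_mul, Nat.add_sub_cancel]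
  push_cast
  linear_combination (-1) ^ i * D^[m] (x ^ i) * x ^ j * D x * choose_mul

theorem binomialIterate_eq_zero {N m : ℕ} (h : m < N) : D.binomialIterate x N m = 0 := by
  induction m generalizing N with
  | zero => exact D.binomialIterate_zero_right x (by omega)
  | succ m ih =>
    obtain ⟨N, rfl⟩ := Nat.exists_eq_succ_of_ne_zero (by omega : N ≠ 0)
    have h := D.map_binomialIterate x N m
    rw [ih (by omega), ih (by omega), map_zero, mul_zero, smul_zero, add_zero] at h
    exact h.symm

end CommRing

section Field

open scoped Nat

variable {K A : Type*} [Field K] [CharZero K] [CommRing A] [Algebra K A] (D : Derivation K A A)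

theorem sum_antidiagonal_smul_pow_mul_iterate_pow_succ (x : A) (n : ℕ) :
    ∑ p ∈ antidiagonal n, (1 / (p.1 ! : K) * ((-1) ^ (p.2 + 1) / ((p.2 + 1)! : K))) •
      (x ^ p.1 * D^[n] (x ^ (p.2 + 1))) = if n = 0 then -x else 0 := by
  have hsum := D.binomialIterate_eq_zero x n.lt_succ_self
  rw [binomialIterate, Nat.sum_antidiagonal_succ] at hsum
  simp only [pow_zero, Nat.choose_zero_right, Nat.cast_one, mul_one, one_smul] at hsum
  have reduced : ∑ p ∈ antidiagonal n, (1 / (p.1 ! : K) * ((-1) ^ (p.2 + 1) / ((p.2 + 1)! : K))) •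
      (x ^ p.1 * D^[n] (x ^ (p.2 + 1))) = -((n + 1)! : K)⁻¹ • (x ^ (n + 1) * D^[n] 1) := by
    rw [neg_smul, ← smul_neg, ← eq_neg_of_add_eq_zero_right hsum, smul_sum,
      ← Nat.sum_antidiagonal_swap]
    refine sum_congr rfl fun ⟨k, q⟩ hkq => ?_
    obtain rfl : k + q = n := mem_antidiagonal.mp hkq
    have hfact := Nat.add_choose_mul_factorial_mul_factorial q (k + 1)
    rw [show q + (k + 1) = k + q + 1 by ring] at hfact
    have hchoose : ((k + q + 1).choose (k + 1) : K) ≠ 0 :=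
      Nat.cast_ne_zero.mpr (Nat.choose_pos (by omega)).ne'
    rw [← Int.cast_smul_eq_zsmul K, smul_smul]
    congr 1
    simp only [Prod.swap_prod_mk, Nat.succ_eq_add_one, ← hfact]
    push_cast
    field_simp
  rw [reduced]
  rcases n with _ | n
  · simp
  · simp [iterate_map_one]

end Field

end Derivation

open PowerSeries

theorem PowerSeries.finite_setOf_coeff_ne_zero {R : Type*} [Semiring R] {F : ℕ → R⟦X⟧}
    (hF : ∀ k m, m < k → coeff m (F k) = 0) (m : ℕ) : {k | coeff m (F k) ≠ 0}.Finite :=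
  (Set.finite_Iic m).subset fun k hk => not_lt.mp fun h => hk (hF k m h)

theorem PowerSeries.tsum_coeff_eq_sum_range {R : Type*} [Semiring R] [TopologicalSpace R]
    {F : ℕ → R⟦X⟧} (hF : ∀ k m, m < k → coeff m (F k) = 0) {m N : ℕ} (h : m < N) :
    ∑' k, coeff m (F k) = ∑ k ∈ range N, coeff m (F k) :=
  tsum_eq_sum fun k hk => hF k m (by simp at hk; omega)

noncomputable def pdDerivation : Derivation ℂ ℂ⟦X⟧ ℂ⟦X⟧ :=
  (-(X ^ 2) : ℂ⟦X⟧) • derivative ℂ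

theorem derivative_eq_dX (f : ℂ⟦X⟧) : derivative ℂ f = dX f := by
  ext n
  simp [dX, coeff_derivative, mul_comm]

theorem coe_pdDerivation : ⇑pdDerivation = pd := by
  ext f : 1
  simp [pdDerivation, pd, derivative_eq_dX]

theorem iterate_pd_eq_pow (k : ℕ) : pd^[k] = ⇑((pdDerivation : ℂ⟦X⟧ →ₗ[ℂ] ℂ⟦X⟧) ^ k) := by
  rw [Module.End.coe_pow, Derivation.coeFn_coe, coe_pdDerivation]

theorem coeff_zero_pd (f : ℂ⟦X⟧) : coeff 0 (pd f) = 0 := by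
  simp [pd]

theorem coeff_succ_pd (m : ℕ) (f : ℂ⟦X⟧) : coeff (m + 1) (pd f) = -m * coeff m f := by
  rcases m with _ | m
  · simp [pd, coeff_X_pow_mul']
  · simp [pd, coeff_X_pow_mul', dX]
    ring

theorem X_pow_dvd_iterate_pd {n : ℕ} {f : ℂ⟦X⟧} (h : X ^ n ∣ f) (k : ℕ) :
    X ^ (n + k) ∣ pd^[k] f := by
  induction k with
  | zero => exact h
  | succ k ih =>
    rw [X_pow_dvd_iff] at ih
    rw [Function.iterate_succ_apply', ← add_assoc, X_pow_dvd_iff]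
    rintro (_ | j) hj
    · exact coeff_zero_pd _
    · rw [coeff_succ_pd, ih j (by omega), mul_zero]

theorem coeff_mul_iterate_pd_of_lt (g f : ℂ⟦X⟧) {m k : ℕ} (h : m < k) :
    coeff m (g * pd^[k] f) = 0 := by
  have hdvd : X ^ k ∣ pd^[k] f := by simpa using X_pow_dvd_iterate_pd (n := 0) (by simp) k
  exact X_pow_dvd_iff.mp (hdvd.mul_left g) m h

theorem coeff_iterate_pd_of_lt (f : ℂ⟦X⟧) {m k : ℕ} (h : m < k) : coeff m (pd^[k] f) = 0 := by
  simpa using coeff_mul_iterate_pd_of_lt 1 f h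

theorem coeff_mul_iterate_pd_eq_of_X_pow_dvd_sub {m : ℕ} {f g : ℂ⟦X⟧}
    (hfg : X ^ (m + 1) ∣ f - g) (h : ℂ⟦X⟧) (k : ℕ) :
    coeff m (h * pd^[k] f) = coeff m (h * pd^[k] g) := by
  have hdvd := (X_pow_dvd_iterate_pd hfg k).mul_left h
  rw [iterate_pd_eq_pow, map_sub, ← iterate_pd_eq_pow, mul_sub, X_pow_dvd_iff] at hdvd
  exact sub_eq_zero.mp (by simpa using hdvd m (by omega))

noncomputable def lagrangeTerm (χ : ℂ⟦X⟧) (q : ℕ) : ℂ⟦X⟧ :=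
  ((-1 : ℂ) ^ (q + 1) / ((q + 1).factorial : ℂ)) • pd^[q] (χ ^ (q + 1))

theorem coeff_lagrangeTerm_of_lt (χ : ℂ⟦X⟧) (k m : ℕ) (h : m < k) :
    coeff m (lagrangeTerm χ k) = 0 := by
  rw [lagrangeTerm, coeff_smul, coeff_iterate_pd_of_lt _ h, smul_zero]

theorem coeff_add_sum_range_smul_pow_mul_iterate_pd_eq_zero (χ : ℂ⟦X⟧) (m : ℕ) :
    coeff m χ + ∑ k ∈ range (m + 1), coeff m ((1 / (k.factorial : ℂ)) •
      (χ ^ k * pd^[k] (∑ q ∈ range (m + 1), lagrangeTerm χ q))) = 0 := by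
  have expand (k : ℕ) : (1 / (k.factorial : ℂ)) •
      (χ ^ k * pd^[k] (∑ q ∈ range (m + 1), lagrangeTerm χ q)) =
      ∑ q ∈ range (m + 1), (1 / (k.factorial : ℂ) * ((-1) ^ (q + 1) / ((q + 1).factorial : ℂ))) •
        (χ ^ k * pd^[k + q] (χ ^ (q + 1))) := by
    simp only [lagrangeTerm, iterate_pd_eq_pow, map_sum, map_smul, ← Module.End.mul_apply,
      ← pow_add, mul_sum, mul_smul_comm, smul_sum, smul_smul]
  have graded (n : ℕ) : ∑ p ∈ antidiagonal n,
      coeff m ((1 / (p.1.factorial : ℂ) * ((-1) ^ (p.2 + 1) / ((p.2 + 1).factorial : ℂ))) •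
        (χ ^ p.1 * pd^[p.1 + p.2] (χ ^ (p.2 + 1)))) = coeff m (if n = 0 then -χ else 0) := by
    rw [← coe_pdDerivation, ← pdDerivation.sum_antidiagonal_smul_pow_mul_iterate_pow_succ χ n,
      map_sum]
    exact sum_congr rfl fun p hp => by rw [mem_antidiagonal.mp hp]
  simp only [expand, map_sum]
  rw [sum_range_sum_range_eq_sum_range_sum_antidiagonal fun k q h => by
      rw [coeff_smul, coeff_mul_iterate_pd_of_lt _ _ (by omega), smul_zero],
    sum_congr rfl fun n _ => graded n]
  simp [apply_ite]

/-- Lagrange reversion: (a) the family `(((−1)^k/k!)·∂^{k−1}(χ^k))_{k≥1}` (reindexed by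
`k+1`) is formally summable — each `∂^k(χ^{k+1})` has `X`-adic order at least `k` — so it
has a coefficientwise sum `φ`; (b) the family `((1/k!)·χ^k·∂^kφ)_{k≥0}` is formally
summable and `χ + Σ_{k≥0} (1/k!)·χ^k·∂^kφ = 0`, i.e. `id+φ` is a left inverse of
`id+χ` for composition. -/
theorem stmt_15 (χ : PowerSeries ℂ) :
    (∀ k m : ℕ, m < k → PowerSeries.coeff m (pd^[k] (χ ^ (k + 1))) = 0) ∧
      (∀ m : ℕ,
        {k : ℕ | PowerSeries.coeff m
            (((-1 : ℂ) ^ (k + 1) / (Nat.factorial (k + 1) : ℂ)) •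
              pd^[k] (χ ^ (k + 1))) ≠ 0}.Finite) ∧
      ∀ φ : PowerSeries ℂ,
        (∀ m : ℕ, PowerSeries.coeff m φ =
          ∑' k : ℕ, PowerSeries.coeff m
            (((-1 : ℂ) ^ (k + 1) / (Nat.factorial (k + 1) : ℂ)) •
              pd^[k] (χ ^ (k + 1)))) →
        (∀ m : ℕ,
          {k : ℕ | PowerSeries.coeff m
              ((1 / (Nat.factorial k : ℂ)) • (χ ^ k * pd^[k] φ)) ≠ 0}.Finite) ∧
        ∀ m : ℕ,
          PowerSeries.coeff m χ +
            ∑' k : ℕ, PowerSeries.coeff m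
              ((1 / (Nat.factorial k : ℂ)) • (χ ^ k * pd^[k] φ)) = 0 := by
  refine ⟨fun k m h => coeff_iterate_pd_of_lt _ h,
    finite_setOf_coeff_ne_zero (coeff_lagrangeTerm_of_lt χ), fun φ hφ => ?_⟩
  replace hφ : ∀ m, coeff m φ = ∑' k, coeff m (lagrangeTerm χ k) := hφ
  have taylor_vanish (k m : ℕ) (h : m < k) :
      coeff m ((1 / (k.factorial : ℂ)) • (χ ^ k * pd^[k] φ)) = 0 := by
    rw [coeff_smul, coeff_mul_iterate_pd_of_lt _ _ h, smul_zero]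
  refine ⟨finite_setOf_coeff_ne_zero taylor_vanish, fun m => ?_⟩
  have truncation : X ^ (m + 1) ∣ φ - ∑ q ∈ range (m + 1), lagrangeTerm χ q :=
    X_pow_dvd_iff.mpr fun j hj => by
      rw [map_sub, hφ j, tsum_coeff_eq_sum_range (coeff_lagrangeTerm_of_lt χ) hj, map_sum, sub_self]
  rw [tsum_coeff_eq_sum_range taylor_vanish (lt_add_one m),
    ← coeff_add_sum_range_smul_pow_mul_iterate_pd_eq_zero χ m]
  simp only [coeff_smul, coeff_mul_iterate_pd_eq_of_X_pow_dvd_sub truncation]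
end
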